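/- arXiv:2010.09267 — 6 statements merged into one kernel-verified Lean document; each statement's English description precedes it below -/
import Mathlib

section
/- For any vector of nonnegative weights w_1,...,w_m summing to m, the q-Wasserstein distance between the empirical measure (1/n)∑δ_{X_i} and the weighted empirical measure (1/m)∑ w_j δ_{X'_j} is bounded below by ((1/n)∑_{i=1}^n |X_i − NN(X_i)|^q)^{1/q}. Consequently the 1-NN weight vector is optimal: it minimizes W_q over all admissible weight vectors, simultaneously for all q ≥ 1. -/
/-!
A coupling of the two empirical measures can only move the mass sitting at `X i` to points of
`{X' j}`, each at distance at least `infDist (X i) {X' j} = ‖X i - X' (NN i)‖`; this gives the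
lower bound for every admissible `w`. The deterministic coupling `X i ↦ X' (NN i)` attains the
bound, and its second marginal is the weighted empirical measure with the 1-NN weights.
-/
open MeasureTheory Metric
open scoped ENNReal BigOperators

/-- The `q`-Wasserstein distance, defined as the infimum over couplings. -/
noncomputable def Wdist {E : Type*} [NormedAddCommGroup E] [MeasurableSpace E]
    (q : ℝ) (μ ν : Measure E) : ℝ :=
  sInf {c : ℝ | ∃ γ : Measure (E × E), IsProbabilityMeasure γ ∧
    γ.map Prod.fst = μ ∧ γ.map Prod.snd = ν ∧
    c = (∫ p, ‖p.1 - p.2‖ ^ q ∂γ) ^ (1 / q)}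

/-- Empirical measure `(1/n) ∑ δ_{X i}`. -/
noncomputable def empMeas {E : Type*} [MeasurableSpace E] {n : ℕ} (X : Fin n → E) : Measure E :=
  (n : ℝ≥0∞)⁻¹ • ∑ i, Measure.dirac (X i)

/-- Weighted empirical measure `(1/m) ∑ w j • δ_{X' j}`. -/
noncomputable def wEmpMeas {E : Type*} [MeasurableSpace E] {m : ℕ}
    (w : Fin m → ℝ) (X' : Fin m → E) : Measure E :=
  (m : ℝ≥0∞)⁻¹ • ∑ j, ENNReal.ofReal (w j) • Measure.dirac (X' j)

section Wasserstein

variable {E : Type*} [NormedAddCommGroup E] [MeasurableSpace E] {q : ℝ} {μ ν : Measure E}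

lemma Wdist_le_of_coupling {γ : Measure (E × E)} [IsProbabilityMeasure γ]
    (h₁ : γ.map Prod.fst = μ) (h₂ : γ.map Prod.snd = ν) :
    Wdist q μ ν ≤ (∫ p, ‖p.1 - p.2‖ ^ q ∂γ) ^ (1 / q) := by
  refine csInf_le ⟨0, ?_⟩ ⟨γ, inferInstance, h₁, h₂, rfl⟩
  rintro _ ⟨γ', -, -, -, rfl⟩
  exact Real.rpow_nonneg (integral_nonneg fun p => Real.rpow_nonneg (norm_nonneg _) q) _

lemma le_Wdist_of_forall_coupling [IsProbabilityMeasure μ] [IsProbabilityMeasure ν] {c : ℝ}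
    (h : ∀ γ : Measure (E × E), IsProbabilityMeasure γ →
      γ.map Prod.fst = μ → γ.map Prod.snd = ν → c ≤ (∫ p, ‖p.1 - p.2‖ ^ q ∂γ) ^ (1 / q)) :
    c ≤ Wdist q μ ν := by
  refine le_csInf ⟨_, μ.prod ν, inferInstance, Measure.fst_prod, Measure.snd_prod, rfl⟩ ?_
  rintro _ ⟨γ, hγ, h₁, h₂, rfl⟩
  exact h γ hγ h₁ h₂

end Wasserstein

lemma Integrable.of_ae_mem_finite {α F : Type*} [MeasurableSpace α] [MeasurableSingletonClass α]
    [NormedAddCommGroup F] {μ : Measure α} [IsFiniteMeasure μ] {T : Set α} (hT : T.Finite)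
    (hμT : ∀ᵐ x ∂μ, x ∈ T) (f : α → F) : Integrable f μ := by
  rw [← Measure.restrict_eq_self_of_ae_mem hμT]
  exact IntegrableOn.of_finite hT

section Empirical

variable {α : Type*} [MeasurableSpace α] {n m : ℕ}

lemma isProbabilityMeasure_empMeas (hn : n ≠ 0) (X : Fin n → α) :
    IsProbabilityMeasure (empMeas X) := by
  constructor
  simp [empMeas, ENNReal.inv_mul_cancel (Nat.cast_ne_zero.2 hn) (ENNReal.natCast_ne_top n)]

lemma isProbabilityMeasure_wEmpMeas (hm : m ≠ 0) {w : Fin m → ℝ} (hw : ∀ j, 0 ≤ w j)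
    (hsum : ∑ j, w j = m) (X' : Fin m → α) : IsProbabilityMeasure (wEmpMeas w X') := by
  constructor
  simp only [wEmpMeas, Measure.smul_apply, Measure.coe_finsetSum, Finset.sum_apply,
    Measure.smul_apply, measure_univ, smul_eq_mul, mul_one]
  rw [← ENNReal.ofReal_sum_of_nonneg fun j _ => hw j, hsum, ENNReal.ofReal_natCast,
    ENNReal.inv_mul_cancel (Nat.cast_ne_zero.2 hm) (ENNReal.natCast_ne_top m)]

lemma map_empMeas {β : Type*} [MeasurableSpace β] (X : Fin n → α) {g : α → β}
    (hg : Measurable g) : (empMeas X).map g = empMeas (g ∘ X) := by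
  simp [empMeas, Measure.map_smul, Measure.map_finset_sum hg.aemeasurable, Measure.map_dirac' hg]

lemma empMeas_comp_eq_wEmpMeas (hn : n ≠ 0) (hm : m ≠ 0) (Y : Fin m → α) (σ : Fin n → Fin m) :
    empMeas (fun i => Y (σ i))
      = wEmpMeas (fun j => (m : ℝ) / n * (Finset.univ.filter fun i => σ i = j).card) Y := by
  have hfiber : ∑ i, Measure.dirac (Y (σ i))
      = ∑ j, (Finset.univ.filter fun i => σ i = j).card • Measure.dirac (Y j) := by
    rw [← Finset.sum_fiberwise Finset.univ σ]
    refine Finset.sum_congr rfl fun j _ => ?_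
    rw [Finset.sum_congr rfl fun i hi => by rw [(Finset.mem_filter.1 hi).2], Finset.sum_const]
  rw [empMeas, wEmpMeas, hfiber, Finset.smul_sum, Finset.smul_sum]
  refine Finset.sum_congr rfl fun j _ => ?_
  rw [← Nat.cast_smul_eq_nsmul ℝ≥0∞, smul_smul, smul_smul]
  congr 1
  rw [ENNReal.ofReal_mul (by positivity), ENNReal.ofReal_div_of_pos (by positivity),
    ENNReal.ofReal_natCast, ENNReal.ofReal_natCast, ENNReal.ofReal_natCast, div_eq_mul_inv,
    ← mul_assoc, ← mul_assoc,
    ENNReal.inv_mul_cancel (Nat.cast_ne_zero.2 hm) (ENNReal.natCast_ne_top m), one_mul]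

variable [MeasurableSingletonClass α]

lemma ae_mem_range_empMeas (X : Fin n → α) : ∀ᵐ x ∂empMeas X, x ∈ Set.range X := by
  rw [ae_iff]
  simp [empMeas, Measure.dirac_apply]

lemma ae_mem_range_wEmpMeas (w : Fin m → ℝ) (X' : Fin m → α) :
    ∀ᵐ x ∂wEmpMeas w X', x ∈ Set.range X' := by
  rw [ae_iff]
  simp [wEmpMeas, Measure.dirac_apply]

lemma integral_empMeas (X : Fin n → α) (f : α → ℝ) :
    ∫ x, f x ∂empMeas X = (1 / n : ℝ) * ∑ i, f (X i) := by
  rw [empMeas, integral_smul_measure,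
    integral_finsetSum_measure fun i _ => integrable_dirac enorm_lt_top]
  simp [integral_dirac, ENNReal.toReal_inv]

end Empirical

lemma infDist_range_eq_norm_sub {E : Type*} [SeminormedAddCommGroup E] {m : ℕ} {x : E}
    {Y : Fin m → E} {k : Fin m} (hk : ∀ j, ‖x - Y k‖ ≤ ‖x - Y j‖) :
    infDist x (Set.range Y) = ‖x - Y k‖ := by
  refine le_antisymm (dist_eq_norm x (Y k) ▸ infDist_le_dist_of_mem (Set.mem_range_self k)) ?_
  rw [le_infDist (Set.range_nonempty_iff_nonempty.2 ⟨k⟩)]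
  rintro _ ⟨j, rfl⟩
  exact dist_eq_norm x (Y j) ▸ hk j

section NearestNeighbour

variable {E : Type*} [NormedAddCommGroup E] [MeasurableSpace E] [BorelSpace E] {n m : ℕ}

lemma sum_infDist_rpow_le_integral {q : ℝ} (hq : 0 ≤ q) {X : Fin n → E} {X' : Fin m → E}
    {w : Fin m → ℝ} {γ : Measure (E × E)} [IsFiniteMeasure γ]
    (h₁ : γ.map Prod.fst = empMeas X) (h₂ : γ.map Prod.snd = wEmpMeas w X') :
    (1 / n : ℝ) * ∑ i, infDist (X i) (Set.range X') ^ q ≤ ∫ p, ‖p.1 - p.2‖ ^ q ∂γ := by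
  have hfst : ∀ᵐ p ∂γ, p.1 ∈ Set.range X :=
    ae_of_ae_map measurable_fst.aemeasurable (h₁ ▸ ae_mem_range_empMeas X)
  have hsnd : ∀ᵐ p ∂γ, p.2 ∈ Set.range X' :=
    ae_of_ae_map measurable_snd.aemeasurable (h₂ ▸ ae_mem_range_wEmpMeas w X')
  have hfin : ∀ᵐ p ∂γ, p ∈ Set.range X ×ˢ Set.range X' := by
    filter_upwards [hfst, hsnd] with p h₁ h₂ using ⟨h₁, h₂⟩
  have hT := (Set.finite_range X).prod (Set.finite_range X')
  have hcont : Continuous fun x : E => infDist x (Set.range X') ^ q :=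
    (continuous_infDist_pt _).rpow_const fun _ => Or.inr hq
  calc (1 / n : ℝ) * ∑ i, infDist (X i) (Set.range X') ^ q
      = ∫ x, infDist x (Set.range X') ^ q ∂empMeas X :=
        (integral_empMeas X fun x => infDist x (Set.range X') ^ q).symm
    _ = ∫ p, infDist p.1 (Set.range X') ^ q ∂γ := by
      rw [← h₁, integral_map measurable_fst.aemeasurable hcont.aestronglyMeasurable]
    _ ≤ ∫ p, ‖p.1 - p.2‖ ^ q ∂γ := by
      refine integral_mono_ae (Integrable.of_ae_mem_finite hT hfin _)
        (Integrable.of_ae_mem_finite hT hfin _) ?_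
      filter_upwards [hsnd] with p ⟨j, hj⟩
      rw [← hj, ← dist_eq_norm]
      exact Real.rpow_le_rpow infDist_nonneg (infDist_le_dist_of_mem (Set.mem_range_self j)) hq

end NearestNeighbour

theorem stmt1_general {E : Type*} [NormedAddCommGroup E]
    [MeasurableSpace E] [BorelSpace E]
    {n m : ℕ} (hn : 0 < n) (hm : 0 < m)
    (X : Fin n → E) (X' : Fin m → E)
    (NN : Fin n → Fin m)
    (hNN : ∀ i j, ‖X i - X' (NN i)‖ ≤ ‖X i - X' j‖)
    (wNN : Fin m → ℝ)
    (hwNN : ∀ j, wNN j = (m : ℝ) / n * ((Finset.univ.filter fun i => NN i = j).card : ℝ)) :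
    ∀ q : ℝ, 1 ≤ q →
      ∀ w : Fin m → ℝ, (∀ j, 0 ≤ w j) → (∑ j, w j) = m →
        ((1 / n : ℝ) * ∑ i, ‖X i - X' (NN i)‖ ^ q) ^ (1 / q)
            ≤ Wdist q (empMeas X) (wEmpMeas w X')
        ∧ Wdist q (empMeas X) (wEmpMeas wNN X')
            ≤ Wdist q (empMeas X) (wEmpMeas w X') := by
  intro q hq w hw hsum
  have hq₀ : 0 ≤ q := zero_le_one.trans hq
  have := isProbabilityMeasure_empMeas hn.ne' X
  have := isProbabilityMeasure_wEmpMeas hm.ne' hw hsum X'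
  have lower : ((1 / n : ℝ) * ∑ i, ‖X i - X' (NN i)‖ ^ q) ^ (1 / q)
      ≤ Wdist q (empMeas X) (wEmpMeas w X') :=
    le_Wdist_of_forall_coupling fun γ _ h₁ h₂ => by
      gcongr
      simpa only [infDist_range_eq_norm_sub (hNN _)] using sum_infDist_rpow_le_integral hq₀ h₁ h₂
  refine ⟨lower, le_trans ?_ lower⟩
  have := isProbabilityMeasure_empMeas hn.ne' fun i => (X i, X' (NN i))
  rw [funext hwNN, ← empMeas_comp_eq_wEmpMeas hn.ne' hm.ne']
  have hcoupling := Wdist_le_of_coupling (q := q)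
    (map_empMeas (fun i => (X i, X' (NN i))) measurable_fst) (map_empMeas _ measurable_snd)
  rwa [integral_empMeas] at hcoupling

/-- Lower bound by the 1-NN cost, and optimality of the 1-NN weight vector,
simultaneously for all `q ≥ 1`. -/
theorem stmt1 {E : Type*} [NormedAddCommGroup E] [NormedSpace ℝ E]
    [MeasurableSpace E] [BorelSpace E]
    {n m : ℕ} (hn : 0 < n) (hm : 0 < m)
    (X : Fin n → E) (X' : Fin m → E)
    (NN : Fin n → Fin m)
    (hNN : ∀ i j, ‖X i - X' (NN i)‖ ≤ ‖X i - X' j‖)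
    (wNN : Fin m → ℝ)
    (hwNN : ∀ j, wNN j = (m : ℝ) / n * ((Finset.univ.filter fun i => NN i = j).card : ℝ)) :
    ∀ q : ℝ, 1 ≤ q →
      ∀ w : Fin m → ℝ, (∀ j, 0 ≤ w j) → (∑ j, w j) = m →
        ((1 / n : ℝ) * ∑ i, ‖X i - X' (NN i)‖ ^ q) ^ (1 / q)
            ≤ Wdist q (empMeas X) (wEmpMeas w X')
        ∧ Wdist q (empMeas X) (wEmpMeas wNN X')
            ≤ Wdist q (empMeas X) (wEmpMeas w X') :=
  stmt1_general hn hm X X' NN hNN wNN hwNN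
end

section
/- Let μ* and ν be probability measures on R^d with supp(μ*) ⊆ supp(ν). Then for every ε > 0 there exists a probability density ρ with respect to ν such that for all q ≥ 1 the q-Wasserstein distance W_q(μ*, ρ dν) < ε. -/
open MeasureTheory Metric
open scoped ENNReal BigOperators

/-- The support of a measure `ν`: points all of whose closed balls have positive measure. -/
def suppSet {E : Type*} [PseudoMetricSpace E] [MeasurableSpace E] (ν : Measure E) : Set E :=
  {x | ∀ r > (0 : ℝ), 0 < ν (closedBall x r)}

/-!
Cover the support of `μ*` by countably many closed balls `B k` of radius `ε / 4` centred in
the support. These balls have positive `ν`-measure, so after making them disjoint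
(`A k = B k \ ⋃ j < k, B j`) the mass `μ* (A k)` can be spread uniformly over `B k` with respect
to `ν`. The resulting measure has a density w.r.t. `ν`, and the coupling
`∑ k, μ*|A k ⊗ ν|B k / ν (B k)` moves mass only inside the balls `B k`, hence by at most `ε / 2`.
-/

theorem suppSet_eq_support {E : Type*} [PseudoMetricSpace E] [MeasurableSpace E]
    (μ : Measure E) : suppSet μ = μ.support := by
  ext x
  exact nhds_basis_closedBall.mem_measureSupport.symm

theorem TopologicalSpace.IsSeparable.exists_seq_subset_iUnion_closedBall {E : Type*}
    [PseudoMetricSpace E] {s : Set E} (hs : TopologicalSpace.IsSeparable s) (hne : s.Nonempty)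
    {δ : ℝ} (hδ : 0 < δ) : ∃ c : ℕ → E, (∀ k, c k ∈ s) ∧ s ⊆ ⋃ k, closedBall (c k) δ := by
  have := hs.separableSpace
  have := hne.to_subtype
  obtain ⟨u, hu⟩ := TopologicalSpace.exists_dense_seq s
  refine ⟨fun k => u k, fun k => (u k).2, fun x hx => ?_⟩
  obtain ⟨k, hk⟩ := hu.exists_dist_lt ⟨x, hx⟩ hδ
  exact Set.mem_iUnion.2 ⟨k, mem_closedBall.2 hk.le⟩

theorem exists_seq_mem_support_ae_mem_iUnion_closedBall {E : Type*} [PseudoMetricSpace E]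
    [SecondCountableTopology E] [MeasurableSpace E] {μ : Measure E}
    (hμ : μ ≠ 0) {δ : ℝ} (hδ : 0 < δ) :
    ∃ c : ℕ → E, (∀ k, c k ∈ μ.support) ∧ ∀ᵐ x ∂μ, x ∈ ⋃ k, closedBall (c k) δ := by
  obtain ⟨c, hc, hcover⟩ := (TopologicalSpace.IsSeparable.of_separableSpace μ.support)
    |>.exists_seq_subset_iUnion_closedBall (Measure.nonempty_support hμ) hδ
  exact ⟨c, hc, Filter.mem_of_superset Measure.support_mem_ae hcover⟩

section BlockCoupling

variable {α : Type*} [MeasurableSpace α] (μ ν : Measure α) (B : ℕ → Set α)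

noncomputable def blockCoupling : Measure (α × α) :=
  Measure.sum fun k => (ν (B k))⁻¹ • (μ.restrict (disjointed B k)).prod (ν.restrict (B k))

noncomputable def blockDensity (x : α) : ℝ≥0∞ :=
  ∑' k, (B k).indicator (fun _ => μ (disjointed B k) / ν (B k)) x

variable {μ ν B}

theorem map_fst_blockCoupling [SFinite ν] (hBm : ∀ k, MeasurableSet (B k))
    (hB0 : ∀ k, ν (B k) ≠ 0) (hBtop : ∀ k, ν (B k) ≠ ∞) (hcover : ∀ᵐ x ∂μ, x ∈ ⋃ k, B k) :
    (blockCoupling μ ν B).map Prod.fst = μ := by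
  rw [blockCoupling, Measure.map_sum measurable_fst.aemeasurable]
  simp_rw [Measure.map_smul, Measure.map_fst_prod, Measure.restrict_apply_univ, smul_smul,
    ENNReal.inv_mul_cancel (hB0 _) (hBtop _), one_smul]
  rw [← Measure.restrict_iUnion (disjoint_disjointed B) (MeasurableSet.disjointed hBm),
    iUnion_disjointed]
  exact Measure.restrict_eq_self_of_ae_mem hcover

theorem map_snd_blockCoupling [SFinite ν] (hBm : ∀ k, MeasurableSet (B k)) :
    (blockCoupling μ ν B).map Prod.snd = ν.withDensity (blockDensity μ ν B) := by
  have hρ : blockDensity μ ν B = ∑' k, (B k).indicator (fun _ => μ (disjointed B k) / ν (B k)) :=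
    funext fun x => (tsum_apply (Pi.summable.2 fun _ => ENNReal.summable)).symm
  rw [blockCoupling, Measure.map_sum measurable_snd.aemeasurable, hρ,
    withDensity_tsum fun k => measurable_const.indicator (hBm k)]
  congr 1
  ext1 k
  rw [Measure.map_smul, Measure.map_snd_prod, Measure.restrict_apply_univ, smul_smul,
    withDensity_indicator (hBm k), withDensity_const, div_eq_mul_inv, mul_comm]

theorem ae_exists_mem_blockCoupling [SFinite ν] (hBm : ∀ k, MeasurableSet (B k)) :
    ∀ᵐ p ∂blockCoupling μ ν B, ∃ k, p.1 ∈ B k ∧ p.2 ∈ B k := by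
  refine Measure.ae_sum_iff.2 fun k => Measure.ae_smul_measure ?_ _
  have hfst := (Measure.quasiMeasurePreserving_fst (ν := ν.restrict (B k))).ae
    (ae_restrict_mem (μ := μ) (MeasurableSet.disjointed hBm k))
  have hsnd := (Measure.quasiMeasurePreserving_snd (μ := μ.restrict (disjointed B k))).ae
    (ae_restrict_mem (μ := ν) (hBm k))
  filter_upwards [hfst, hsnd] with p h1 h2
  exact ⟨k, disjointed_subset B k h1, h2⟩

end BlockCoupling

theorem Wdist_le_of_ae_norm_sub_le {E : Type*} [NormedAddCommGroup E] [MeasurableSpace E]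
    {μ ν : Measure E} {γ : Measure (E × E)} [IsProbabilityMeasure γ]
    (hfst : γ.map Prod.fst = μ) (hsnd : γ.map Prod.snd = ν) {q r : ℝ} (hq : 0 < q) (hr : 0 ≤ r)
    (h : ∀ᵐ p ∂γ, ‖p.1 - p.2‖ ≤ r) : Wdist q μ ν ≤ r := by
  have hcost_nonneg : ∀ γ' : Measure (E × E), 0 ≤ ∫ p, ‖p.1 - p.2‖ ^ q ∂γ' := fun _ =>
    integral_nonneg fun _ => Real.rpow_nonneg (norm_nonneg _) q
  have hcost : ∫ p, ‖p.1 - p.2‖ ^ q ∂γ ≤ r ^ q := by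
    calc ∫ p, ‖p.1 - p.2‖ ^ q ∂γ ≤ ∫ _, r ^ q ∂γ :=
          integral_mono_of_nonneg (.of_forall fun _ => Real.rpow_nonneg (norm_nonneg _) q)
            (integrable_const _)
            (h.mono fun p hp => Real.rpow_le_rpow (norm_nonneg _) hp hq.le)
      _ = r ^ q := by simp
  calc Wdist q μ ν ≤ (∫ p, ‖p.1 - p.2‖ ^ q ∂γ) ^ (1 / q) := by
        refine csInf_le ⟨0, ?_⟩ ⟨γ, inferInstance, hfst, hsnd, rfl⟩
        rintro _ ⟨γ', -, -, -, rfl⟩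
        exact Real.rpow_nonneg (hcost_nonneg γ') _
    _ ≤ (r ^ q) ^ (1 / q) := Real.rpow_le_rpow (hcost_nonneg γ) hcost (by positivity)
    _ = r := by rw [one_div, Real.rpow_rpow_inv hr hq.ne']

/-- Approximation in Wasserstein distance by measures absolutely continuous w.r.t. `ν`. -/
theorem stmt3 {d : ℕ} (μs ν : Measure (EuclideanSpace ℝ (Fin d)))
    [IsProbabilityMeasure μs] [IsProbabilityMeasure ν]
    (hsupp : suppSet μs ⊆ suppSet ν)
    (ε : ℝ) (hε : 0 < ε) :
    ∃ ρ : EuclideanSpace ℝ (Fin d) → ℝ≥0∞,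
      IsProbabilityMeasure (ν.withDensity ρ) ∧
      ∀ q : ℝ, 1 ≤ q → Wdist q μs (ν.withDensity ρ) < ε := by
  obtain ⟨c, hc, hcover⟩ := exists_seq_mem_support_ae_mem_iUnion_closedBall
    (IsProbabilityMeasure.ne_zero μs) (by positivity : 0 < ε / 4)
  set B := fun k => closedBall (c k) (ε / 4)
  have hBm : ∀ k, MeasurableSet (B k) := fun k => measurableSet_closedBall
  have hνB : ∀ k, 0 < ν (B k) := fun k =>
    hsupp (by rw [suppSet_eq_support]; exact hc k) (ε / 4) (by positivity)
  have hfst := map_fst_blockCoupling hBm (fun k => (hνB k).ne') (fun k => measure_ne_top ν _)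
    hcover
  have : IsProbabilityMeasure (blockCoupling μs ν B) := by
    rw [← Measure.isProbabilityMeasure_map_iff measurable_fst.aemeasurable, hfst]
    infer_instance
  refine ⟨blockDensity μs ν B, map_snd_blockCoupling (μ := μs) (ν := ν) hBm ▸
    Measure.isProbabilityMeasure_map measurable_snd.aemeasurable, fun q hq => ?_⟩
  have hdist : ∀ᵐ p ∂blockCoupling μs ν B, ‖p.1 - p.2‖ ≤ ε / 2 := by
    filter_upwards [ae_exists_mem_blockCoupling hBm] with p ⟨k, h1, h2⟩
    rw [← dist_eq_norm]
    linarith [dist_triangle_right p.1 p.2 (c k), mem_closedBall.1 h1, mem_closedBall.1 h2]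
  calc Wdist q μs (ν.withDensity (blockDensity μs ν B)) ≤ ε / 2 :=
        Wdist_le_of_ae_norm_sub_le hfst (map_snd_blockCoupling hBm) (by linarith) (by positivity)
          hdist
    _ < ε := half_lt_self hε
end

section
/- If X'_1, X'_2, ... are i.i.d. random vectors in R^d such that E[min_{j ≤ m_0} |X'_j|] < ∞ for some m_0 ≥ 1, then for every q ≥ 1 and every m ≥ ⌈q⌉·m_0, one has E[min_{j ≤ m} |X'_j|^q] ≤ (E[min_{j ≤ m_0} |X'_j|])^q < ∞. -/
/-!
Split the first `⌈q⌉ * m₀` indices into `k = ⌈q⌉` consecutive blocks of length `m₀` and let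
`Y i` be the minimum norm over block `i`. The overall minimum `Z` is at most every `Y i`, so
`Z ^ k ≤ ∏ i < k, Y i`. The blocks are independent and identically distributed, hence
`E[Z ^ k] ≤ E[Y 0] ^ k`, and monotonicity of `Lᵖ` norms on a probability space
(`‖Z‖_q ≤ ‖Z‖_k` for `q ≤ k`) gives `E[Z ^ q] ≤ E[Y 0] ^ q`.
-/

open MeasureTheory ProbabilityTheory

lemma measurable_biSup_comap {Ω ι β : Type*} {mβ : MeasurableSpace β} {X : ι → Ω → β}
    {S : Set ι} {i : ι} (hi : i ∈ S) : Measurable[⨆ j ∈ S, mβ.comap (X j)] (X i) :=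
  (comap_measurable (X i)).mono (le_iSup₂ (f := fun j (_ : j ∈ S) => mβ.comap (X j)) i hi) le_rfl

namespace ProbabilityTheory

variable {Ω ι β : Type*} {mΩ : MeasurableSpace Ω} {μ : Measure Ω} {mβ : MeasurableSpace β}
  {X : ι → Ω → β}

lemma iIndepFun.indepFun_of_measurable_biSup {γ δ : Type*} [MeasurableSpace γ]
    [MeasurableSpace δ] (hX : iIndepFun X μ) (hmeas : ∀ i, Measurable (X i)) {S T : Set ι}
    (hST : Disjoint S T) {f : Ω → γ} {g : Ω → δ}
    (hf : Measurable[⨆ i ∈ S, mβ.comap (X i)] f) (hg : Measurable[⨆ i ∈ T, mβ.comap (X i)] g) :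
    IndepFun f g μ := by
  rw [IndepFun_iff_Indep]
  exact indep_of_indep_of_le
    (indep_iSup_of_disjoint (fun i => (hmeas i).comap_le) hX.iIndep hST) hf.comap_le hg.comap_le

end ProbabilityTheory

lemma integral_rpow_le_of_eLpNorm_le {Ω : Type*} {mΩ : MeasurableSpace Ω} {μ : Measure Ω}
    {Z : Ω → ℝ} (hZ : 0 ≤ Z) (hZm : AEStronglyMeasurable Z μ) {q c : ℝ} (hq : 0 < q)
    (hc : 0 ≤ c) (h : eLpNorm Z (ENNReal.ofReal q) μ ≤ ENNReal.ofReal c) :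
    ∫ ω, Z ω ^ q ∂μ ≤ c ^ q := by
  have hZq : MemLp Z (ENNReal.ofReal q) μ := ⟨hZm, h.trans_lt ENNReal.ofReal_lt_top⟩
  rw [hZq.eLpNorm_eq_integral_rpow_norm (by simpa using hq) ENNReal.ofReal_ne_top,
    ENNReal.ofReal_le_ofReal_iff hc, ENNReal.toReal_ofReal hq.le] at h
  simp only [fun ω => Real.norm_of_nonneg (hZ ω)] at h
  calc ∫ ω, Z ω ^ q ∂μ = ((∫ ω, Z ω ^ q ∂μ) ^ q⁻¹) ^ q :=
        (Real.rpow_inv_rpow (integral_nonneg fun ω => Real.rpow_nonneg (hZ ω) q) hq.ne').symm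
    _ ≤ c ^ q := Real.rpow_le_rpow
        (Real.rpow_nonneg (integral_nonneg fun ω => Real.rpow_nonneg (hZ ω) q) _) h hq.le

section BlockMinimum

variable {Ω E : Type*} {mΩ : MeasurableSpace Ω} {P : Measure Ω} [NormedAddCommGroup E]
  {X : ℕ → Ω → E}

noncomputable def blockMinNorm (X : ℕ → Ω → E) (r i : ℕ) (ω : Ω) : ℝ :=
  ⨅ j : Fin r, ‖X (r * i + j) ω‖

lemma blockMinNorm_nonneg (r i : ℕ) : 0 ≤ blockMinNorm X r i :=
  fun _ => Real.iInf_nonneg fun _ => norm_nonneg _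

lemma blockMinNorm_zero_apply (r : ℕ) (ω : Ω) :
    blockMinNorm X r 0 ω = ⨅ j : Fin r, ‖X j ω‖ := by
  simp [blockMinNorm]

lemma blockMinNorm_zero_le {r m i : ℕ} (hr : 0 < r) (hi : r * (i + 1) ≤ m) (ω : Ω) :
    blockMinNorm X m 0 ω ≤ blockMinNorm X r i ω := by
  have : Nonempty (Fin r) := ⟨⟨0, hr⟩⟩
  rw [blockMinNorm_zero_apply]
  refine le_ciInf fun j => ?_
  have hj : r * i + j < m := by rw [mul_add_one] at hi; omega
  exact ciInf_le (Set.finite_range _).bddBelow (⟨r * i + j, hj⟩ : Fin m)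

variable [mE : MeasurableSpace E] [BorelSpace E]

lemma measurable_blockMinNorm {m : MeasurableSpace Ω} {r i : ℕ}
    (hX : ∀ j < r, Measurable[m] (X (r * i + j))) : Measurable[m] (blockMinNorm X r i) :=
  Measurable.iInf fun j => (hX j j.isLt).norm

lemma identDistrib_blockMinNorm (hmeas : ∀ n, Measurable (X n)) (hindep : iIndepFun X P)
    (hident : ∀ n, P.map (X n) = P.map (X 0)) (r i : ℕ) :
    IdentDistrib (blockMinNorm X r i) (blockMinNorm X r 0) P P := by
  have hinj : ∀ i, Function.Injective fun j : Fin r => r * i + (j : ℕ) :=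
    fun i _ _ h => Fin.val_injective (Nat.add_left_cancel h)
  have hblock : IdentDistrib (fun ω (j : Fin r) => X (r * i + j) ω)
      (fun ω (j : Fin r) => X (r * 0 + j) ω) P P :=
    IdentDistrib.pi
      (fun j => ⟨(hmeas _).aemeasurable, (hmeas _).aemeasurable, (hident _).trans (hident _).symm⟩)
      (hindep.precomp (hinj i)) (hindep.precomp (hinj 0))
  exact hblock.comp (u := fun v : Fin r → E => ⨅ j, ‖v j‖)
    (Measurable.iInf fun j => (measurable_pi_apply j).norm)

lemma lintegral_enorm_blockMinNorm_eq (hmeas : ∀ n, Measurable (X n)) (hindep : iIndepFun X P)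
    (hident : ∀ n, P.map (X n) = P.map (X 0)) (r i : ℕ) :
    ∫⁻ ω, ‖blockMinNorm X r i ω‖ₑ ∂P = ∫⁻ ω, ‖blockMinNorm X r 0 ω‖ₑ ∂P :=
  ((identDistrib_blockMinNorm hmeas hindep hident r i).comp measurable_enorm).lintegral_eq

lemma lintegral_prod_enorm_blockMinNorm (hmeas : ∀ n, Measurable (X n))
    (hindep : iIndepFun X P) (r k : ℕ) :
    ∫⁻ ω, ∏ i ∈ Finset.range k, ‖blockMinNorm X r i ω‖ₑ ∂P
      = ∏ i ∈ Finset.range k, ∫⁻ ω, ‖blockMinNorm X r i ω‖ₑ ∂P := by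
  induction k with
  | zero =>
    have := hindep.isProbabilityMeasure
    simp
  | succ k ih =>
    have hearly : Measurable[⨆ n ∈ Set.Iio (r * k), mE.comap (X n)]
        fun ω => ∏ i ∈ Finset.range k, ‖blockMinNorm X r i ω‖ₑ := by
      refine Finset.measurable_prod _ fun i hi =>
        measurable_enorm.comp (measurable_blockMinNorm fun j hj => ?_)
      refine measurable_biSup_comap (Set.mem_Iio.2 ?_)
      have := Nat.mul_le_mul_left r (Finset.mem_range.1 hi)
      rw [Nat.mul_succ] at this
      omega
    have hlate : Measurable[⨆ n ∈ Set.Ici (r * k), mE.comap (X n)]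
        fun ω => ‖blockMinNorm X r k ω‖ₑ :=
      measurable_enorm.comp (measurable_blockMinNorm fun j _ => measurable_biSup_comap
        (Set.mem_Ici.2 (Nat.le_add_right _ _)))
    have hindep_block := hindep.indepFun_of_measurable_biSup hmeas
      (Set.Iio_disjoint_Ici le_rfl) hearly hlate
    simp only [Finset.prod_range_succ]
    rw [← ih]
    exact lintegral_mul_eq_lintegral_mul_lintegral_of_indepFun
      (hearly.mono (iSup₂_le fun n _ => (hmeas n).comap_le) le_rfl)
      (hlate.mono (iSup₂_le fun n _ => (hmeas n).comap_le) le_rfl) hindep_block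

lemma lintegral_enorm_blockMinNorm_pow_le (hmeas : ∀ n, Measurable (X n))
    (hindep : iIndepFun X P) (hident : ∀ n, P.map (X n) = P.map (X 0)) {r k m : ℕ}
    (hr : 0 < r) (hm : k * r ≤ m) :
    ∫⁻ ω, ‖blockMinNorm X m 0 ω‖ₑ ^ k ∂P ≤ (∫⁻ ω, ‖blockMinNorm X r 0 ω‖ₑ ∂P) ^ k := by
  have hle : ∀ i ∈ Finset.range k, ∀ ω, ‖blockMinNorm X m 0 ω‖ₑ ≤ ‖blockMinNorm X r i ω‖ₑ := by
    intro i hi ω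
    have hi' : r * (i + 1) ≤ m :=
      (Nat.mul_le_mul_left r (Finset.mem_range.1 hi)).trans (by rwa [Nat.mul_comm])
    rw [Real.enorm_of_nonneg (blockMinNorm_nonneg _ _ ω),
      Real.enorm_of_nonneg (blockMinNorm_nonneg _ _ ω)]
    exact ENNReal.ofReal_le_ofReal (blockMinNorm_zero_le hr hi' ω)
  calc ∫⁻ ω, ‖blockMinNorm X m 0 ω‖ₑ ^ k ∂P
      ≤ ∫⁻ ω, ∏ i ∈ Finset.range k, ‖blockMinNorm X r i ω‖ₑ ∂P := lintegral_mono fun ω => by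
        simpa using Finset.pow_card_le_prod _ _ _ fun i hi => hle i hi ω
    _ = ∏ i ∈ Finset.range k, ∫⁻ ω, ‖blockMinNorm X r i ω‖ₑ ∂P :=
        lintegral_prod_enorm_blockMinNorm hmeas hindep r k
    _ = (∫⁻ ω, ‖blockMinNorm X r 0 ω‖ₑ ∂P) ^ k := by
        rw [Finset.prod_congr rfl fun i _ =>
          lintegral_enorm_blockMinNorm_eq hmeas hindep hident r i, Finset.prod_const,
          Finset.card_range]

lemma eLpNorm_blockMinNorm_le (hmeas : ∀ n, Measurable (X n))
    (hindep : iIndepFun X P) (hident : ∀ n, P.map (X n) = P.map (X 0)) {r k m : ℕ}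
    (hr : 0 < r) (hk : k ≠ 0) (hm : k * r ≤ m) :
    eLpNorm (blockMinNorm X m 0) k P ≤ eLpNorm (blockMinNorm X r 0) 1 P := by
  rw [eLpNorm_eq_lintegral_rpow_enorm_toReal (by simpa using hk) (by simp),
    eLpNorm_one_eq_lintegral_enorm, ENNReal.toReal_natCast, one_div,
    ENNReal.rpow_inv_le_iff (by positivity)]
  simpa [ENNReal.rpow_natCast] using lintegral_enorm_blockMinNorm_pow_le hmeas hindep hident hr hm

end BlockMinimum

/-- Min-integrability propagates: for `m ≥ ⌈q⌉·m₀`, the `q`-th moment of the minimum norm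
over `m` i.i.d. vectors is bounded by the `q`-th power of `E[min_{j ≤ m₀} |X'_j|]`. -/
theorem stmt5 {E : Type*} [NormedAddCommGroup E] [MeasurableSpace E] [BorelSpace E]
    {Ω : Type*} [MeasurableSpace Ω] (P : Measure Ω) [IsProbabilityMeasure P]
    (X' : ℕ → Ω → E)
    (hmeas : ∀ j, Measurable (X' j))
    (hindep : iIndepFun X' P)
    (hident : ∀ j, Measure.map (X' j) P = Measure.map (X' 0) P)
    (m₀ : ℕ) (hm₀ : 1 ≤ m₀)
    (hint : Integrable (fun ω => ⨅ j : Fin m₀, ‖X' j ω‖) P)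
    (q : ℝ) (hq : 1 ≤ q) (m : ℕ) (hm : ⌈q⌉₊ * m₀ ≤ m) :
    ∫ ω, (⨅ j : Fin m, ‖X' j ω‖) ^ q ∂P
      ≤ (∫ ω, ⨅ j : Fin m₀, ‖X' j ω‖ ∂P) ^ q := by
  simp only [← blockMinNorm_zero_apply] at hint ⊢
  have hq₀ : 0 < q := by linarith
  have hZ := measurable_blockMinNorm (r := m) (i := 0) fun j _ => hmeas _
  refine integral_rpow_le_of_eLpNorm_le (blockMinNorm_nonneg m 0) hZ.aestronglyMeasurable hq₀
    (integral_nonneg (blockMinNorm_nonneg m₀ 0)) ?_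
  calc eLpNorm (blockMinNorm X' m 0) (ENNReal.ofReal q) P
      ≤ eLpNorm (blockMinNorm X' m 0) ⌈q⌉₊ P := by
        refine eLpNorm_le_eLpNorm_of_exponent_le ?_ hZ.aestronglyMeasurable
        rw [← ENNReal.ofReal_natCast]
        exact ENNReal.ofReal_le_ofReal (Nat.le_ceil q)
    _ ≤ eLpNorm (blockMinNorm X' m₀ 0) 1 P :=
        eLpNorm_blockMinNorm_le hmeas hindep hident hm₀ (Nat.ceil_pos.2 hq₀).ne' hm
    _ = ENNReal.ofReal (∫ ω, blockMinNorm X' m₀ 0 ω ∂P) := by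
        rw [eLpNorm_one_eq_lintegral_enorm, ← ofReal_integral_norm_eq_lintegral_enorm hint]
        simp only [Real.norm_of_nonneg (blockMinNorm_nonneg m₀ 0 _)]
end

section
/- Let X' be a random vector in R^d whose law has, on an open set U ⊇ supp(μ_X), a continuous positive density p satisfying the strong minimal mass assumption: there exist κ ∈ (0,1] and r_κ > 0 such that P(X' ∈ B(x,r)) ≥ κ p(x) v_d r^d for all x ∈ U, r ∈ [0, r_κ]. Then for x ∈ supp(μ_X), t ∈ [0, r_κ^q m^{q/d}], and m i.i.d. copies X'_1,...,X'_m, one has P(min_j |x − X'_j|^q > t/m^{q/d}) ≤ exp(−κ v_d p(x) t^{d/q}). -/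
open MeasureTheory ProbabilityTheory Metric
open scoped ENNReal BigOperators

/-!
With `r = (t / m ^ (q / d)) ^ (1 / q)` one has `r ≤ r_κ` and `m r ^ d = t ^ (d / q)`. The nearest
of `X'₁, …, X'ₘ` is farther than `r` from `x` only if none of them falls in `B(x, r)`, which by
independence has probability `(1 - μ' B(x, r)) ^ m ≤ (1 - κ p(x) v_d r ^ d) ^ m`, and
`1 - a ≤ exp (-a)` turns this into `exp (-κ v_d p(x) m r ^ d)`.
-/

lemma ENNReal.one_sub_ofReal_le_ofReal_exp_neg (a : ℝ) :
    1 - ENNReal.ofReal a ≤ ENNReal.ofReal (Real.exp (-a)) := by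
  rcases le_total 0 a with ha | ha
  · rw [← ENNReal.ofReal_one, ← ENNReal.ofReal_sub _ ha]
    exact ENNReal.ofReal_le_ofReal (by linarith [Real.add_one_le_exp (-a)])
  · calc 1 - ENNReal.ofReal a ≤ 1 := tsub_le_self
      _ = ENNReal.ofReal 1 := ENNReal.ofReal_one.symm
      _ ≤ ENNReal.ofReal (Real.exp (-a)) :=
        ENNReal.ofReal_le_ofReal (Real.one_le_exp (neg_nonneg.2 ha))

section IdenticallyDistributed

variable {Ω ι E : Type*} [MeasurableSpace Ω] [MeasurableSpace E] {P : Measure Ω}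
  {μ : Measure E} {X : ι → Ω → E}

lemma ProbabilityTheory.iIndepFun.measure_biInter_preimage_eq_pow (hindep : iIndepFun X P)
    (hmeas : ∀ i, Measurable (X i)) (hlaw : ∀ i, P.map (X i) = μ) {s : Set E}
    (hs : MeasurableSet s) (S : Finset ι) :
    P (⋂ i ∈ S, X i ⁻¹' s) = μ s ^ S.card := by
  rw [hindep.measure_inter_preimage_eq_mul S fun _ _ => hs, ← Finset.prod_const]
  refine Finset.prod_congr rfl fun i _ => ?_
  rw [← hlaw i, Measure.map_apply (hmeas i) hs]

lemma ProbabilityTheory.iIndepFun.measure_biInter_preimage_compl_le_exp [IsProbabilityMeasure μ]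
    (hindep : iIndepFun X P) (hmeas : ∀ i, Measurable (X i)) (hlaw : ∀ i, P.map (X i) = μ)
    {s : Set E} (hs : MeasurableSet s) {a : ℝ} (ha : ENNReal.ofReal a ≤ μ s) (S : Finset ι) :
    P (⋂ i ∈ S, X i ⁻¹' sᶜ) ≤ ENNReal.ofReal (Real.exp (-(S.card * a))) := by
  calc P (⋂ i ∈ S, X i ⁻¹' sᶜ) = (1 - μ s) ^ S.card := by
        rw [hindep.measure_biInter_preimage_eq_pow hmeas hlaw hs.compl, prob_compl_eq_one_sub hs]
    _ ≤ ENNReal.ofReal (Real.exp (-a)) ^ S.card := by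
        gcongr
        exact (tsub_le_tsub_left ha 1).trans (ENNReal.one_sub_ofReal_le_ofReal_exp_neg a)
    _ = ENNReal.ofReal (Real.exp (-(S.card * a))) := by
        rw [← ENNReal.ofReal_pow (Real.exp_nonneg _), ← Real.exp_nat_mul, mul_neg]

end IdenticallyDistributed

lemma notMem_closedBall_of_rpow_lt_iInf_norm_sub {E ι : Type*} [SeminormedAddCommGroup E]
    {x : E} {y : ι → E} {r q : ℝ} (hr : 0 ≤ r) (hq : 0 < q)
    (h : r ^ q < (⨅ j, ‖x - y j‖) ^ q) (i : ι) : y i ∉ closedBall x r := by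
  have hinf : r < ⨅ j, ‖x - y j‖ :=
    (Real.rpow_lt_rpow_iff hr (Real.iInf_nonneg fun _ => norm_nonneg _) hq).1 h
  rw [mem_closedBall_iff_norm', not_le]
  exact hinf.trans_le (ciInf_le ⟨0, Set.forall_mem_range.2 fun _ => norm_nonneg _⟩ i)

lemma natCast_mul_rpow_inv_div_rpow_pow {d m : ℕ} (hd : d ≠ 0) (hm : m ≠ 0) {q t : ℝ}
    (hq : q ≠ 0) (ht : 0 ≤ t) :
    m * ((t / (m : ℝ) ^ (q / d)) ^ q⁻¹) ^ d = t ^ ((d : ℝ) / q) := by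
  have hm0 : (0 : ℝ) ≤ m := m.cast_nonneg
  rw [← Real.rpow_natCast, ← Real.rpow_mul (by positivity), Real.div_rpow ht (by positivity),
    ← Real.rpow_mul hm0, show q / d * (q⁻¹ * d) = 1 by field_simp, Real.rpow_one,
    mul_div_cancel₀ _ (by exact_mod_cast hm), inv_mul_eq_div]

theorem stmt8_general {d : ℕ} (hd : 1 ≤ d)
    {Ω : Type*} [MeasurableSpace Ω] (P : Measure Ω)
    (μ' : Measure (EuclideanSpace ℝ (Fin d))) [IsProbabilityMeasure μ']
    (X' : ℕ → Ω → EuclideanSpace ℝ (Fin d))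
    (hmeas : ∀ j, Measurable (X' j))
    (hindep : iIndepFun X' P)
    (hlaw : ∀ j, Measure.map (X' j) P = μ')
    (U : Set (EuclideanSpace ℝ (Fin d)))
    (p : EuclideanSpace ℝ (Fin d) → ℝ)
    (κ rκ : ℝ) (hrκ : 0 < rκ)
    (vd : ℝ)
    (hsmma : ∀ y ∈ U, ∀ r ∈ Set.Icc (0 : ℝ) rκ,
      ENNReal.ofReal (κ * p y * vd * r ^ d) ≤ μ' (closedBall y r))
    (x : EuclideanSpace ℝ (Fin d)) (hx : x ∈ U)
    (q : ℝ) (hq : 1 ≤ q) (m : ℕ) (hm : 1 ≤ m)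
    (t : ℝ) (ht : t ∈ Set.Icc 0 (rκ ^ q * (m : ℝ) ^ (q / d))) :
    P {ω | t / (m : ℝ) ^ (q / d) < (⨅ j : Fin m, ‖x - X' j ω‖) ^ q}
      ≤ ENNReal.ofReal (Real.exp (-(κ * vd * p x * t ^ ((d : ℝ) / q)))) := by
  have hq0 : 0 < q := one_pos.trans_le hq
  have hM : 0 < (m : ℝ) ^ (q / d) := by positivity
  have htM : 0 ≤ t / (m : ℝ) ^ (q / d) := div_nonneg ht.1 hM.le
  set r := (t / (m : ℝ) ^ (q / d)) ^ q⁻¹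
  have hr0 : 0 ≤ r := Real.rpow_nonneg htM _
  have hrq : r ^ q = t / (m : ℝ) ^ (q / d) := Real.rpow_inv_rpow htM hq0.ne'
  have hrle : r ≤ rκ :=
    (Real.rpow_inv_le_iff_of_pos htM hrκ.le hq0).2 ((div_le_iff₀ hM).2 ht.2)
  have hmr : (m : ℝ) * r ^ d = t ^ ((d : ℝ) / q) :=
    natCast_mul_rpow_inv_div_rpow_pow (by omega) (by omega) hq0.ne' ht.1
  have hevent : {ω | t / (m : ℝ) ^ (q / d) < (⨅ j : Fin m, ‖x - X' j ω‖) ^ q}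
      ⊆ ⋂ i ∈ Finset.range m, X' i ⁻¹' (closedBall x r)ᶜ := by
    intro ω hω
    simp only [Set.mem_iInter, Finset.mem_range]
    intro i hi
    rw [← hrq] at hω
    exact notMem_closedBall_of_rpow_lt_iInf_norm_sub hr0 hq0 hω ⟨i, hi⟩
  calc _ ≤ P (⋂ i ∈ Finset.range m, X' i ⁻¹' (closedBall x r)ᶜ) := measure_mono hevent
    _ ≤ _ := hindep.measure_biInter_preimage_compl_le_exp hmeas hlaw measurableSet_closedBall
          (hsmma x hx r ⟨hr0, hrle⟩) _
    _ = _ := by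
        rw [Finset.card_range, ← hmr]
        ring_nf

/-- Exponential tail bound for the nearest-neighbor distance under the strong minimal
mass assumption. -/
theorem stmt8 {d : ℕ} (hd : 1 ≤ d)
    {Ω : Type*} [MeasurableSpace Ω] (P : Measure Ω) [IsProbabilityMeasure P]
    (μ' : Measure (EuclideanSpace ℝ (Fin d))) [IsProbabilityMeasure μ']
    (X' : ℕ → Ω → EuclideanSpace ℝ (Fin d))
    (hmeas : ∀ j, Measurable (X' j))
    (hindep : iIndepFun X' P)
    (hlaw : ∀ j, Measure.map (X' j) P = μ')
    (U : Set (EuclideanSpace ℝ (Fin d))) (hU : IsOpen U)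
    (p : EuclideanSpace ℝ (Fin d) → ℝ)
    (hdens : μ'.restrict U
      = (volume.withDensity fun y => ENNReal.ofReal (p y)).restrict U)
    (hcont : ContinuousOn p U) (hpos : ∀ y ∈ U, 0 < p y)
    (κ rκ : ℝ) (hκ : κ ∈ Set.Ioc (0 : ℝ) 1) (hrκ : 0 < rκ)
    (vd : ℝ)
    (hvd : vd = (volume (closedBall (0 : EuclideanSpace ℝ (Fin d)) 1)).toReal)
    (hsmma : ∀ y ∈ U, ∀ r ∈ Set.Icc (0 : ℝ) rκ,
      ENNReal.ofReal (κ * p y * vd * r ^ d) ≤ μ' (closedBall y r))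
    (x : EuclideanSpace ℝ (Fin d)) (hx : x ∈ U)
    (q : ℝ) (hq : 1 ≤ q) (m : ℕ) (hm : 1 ≤ m)
    (t : ℝ) (ht : t ∈ Set.Icc 0 (rκ ^ q * (m : ℝ) ^ (q / d))) :
    P {ω | t / (m : ℝ) ^ (q / d) < (⨅ j : Fin m, ‖x - X' j ω‖) ^ q}
      ≤ ENNReal.ofReal (Real.exp (-(κ * vd * p x * t ^ ((d : ℝ) / q)))) :=
  stmt8_general hd P μ' X' hmeas hindep hlaw U p κ rκ hrκ vd hsmma x hx q hq m hm t ht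
end

section
/- Let μ_X' be a probability measure on R^d with density p(x) = h(‖x − x_0‖) where ‖·‖ is a Euclidean norm (induced by an inner product), x_0 ∈ R^d, and h : [0,∞) → (0,∞) is continuous, positive and nonincreasing. Then p satisfies the strong minimal mass assumption on all of R^d: there exist κ ∈ (0,1] and r_κ > 0 such that for all x ∈ R^d and r ∈ [0, r_κ], P(X' ∈ B(x,r)) ≥ κ p(x) v_d r^d. -/
open MeasureTheory
open scoped ENNReal

/-!
`N` is a norm on a finite-dimensional space, hence `N ≤ C ‖·‖` for some `C`, so the `N`-ball
`B(x, r)` contains the Euclidean ball of radius `2s`, `s = r / (2C)`, around `x`. Inside it sits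
a Euclidean ball of radius `s` centred on the segment from `x` to `x₀` (at `x₀` itself if `x` is
within `s` of `x₀`), all of whose points are at distance at most `max ‖x - x₀‖ s` from `x₀`.
There the density is at least `p x`, resp. at least `h 1 ≥ (h 1 / h 0) p x` since `s ≤ 1`, which
gives `ν B(x, r) ≥ (h 1 / h 0) p(x) s^d |B_eucl(0, 1)|`. The equivalence of `N` with the
Euclidean norm also makes `v_d` positive and finite.
-/

open Metric Module

namespace Seminorm

variable {E : Type*} [NormedAddCommGroup E] [NormedSpace ℝ E] [FiniteDimensional ℝ E]

theorem continuous_of_finiteDimensional (q : Seminorm ℝ E) : Continuous q :=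
  q.convexOn.locallyLipschitz.continuous

theorem exists_pos_mul_norm_le (q : Seminorm ℝ E) (hq : ∀ x, q x = 0 → x = 0) :
    ∃ m > 0, ∀ x, m * ‖x‖ ≤ q x := by
  cases subsingleton_or_nontrivial E
  · exact ⟨1, one_pos, fun x => by simp [Subsingleton.elim x 0]⟩
  obtain ⟨z, hz, hmin⟩ := (isCompact_sphere (0 : E) 1).exists_isMinOn
    (NormedSpace.sphere_nonempty.2 zero_le_one) q.continuous_of_finiteDimensional.continuousOn
  have hz0 : z ≠ 0 := ne_zero_of_mem_unit_sphere ⟨z, hz⟩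
  refine ⟨q z, (apply_nonneg q z).lt_of_ne fun h => hz0 (hq z h.symm), fun x => ?_⟩
  rcases eq_or_ne x 0 with rfl | hx
  · simp
  have hxn : 0 < ‖x‖ := norm_pos_iff.2 hx
  have hunit : ‖x‖⁻¹ • x ∈ sphere (0 : E) 1 := by
    simp [norm_smul, hxn.ne']
  calc q z * ‖x‖ ≤ q (‖x‖⁻¹ • x) * ‖x‖ := by gcongr; exact hmin hunit
    _ = q x := by rw [map_smul_eq_mul, norm_inv, norm_norm]; field_simp

variable [MeasurableSpace E] (μ : Measure E) [μ.IsAddHaarMeasure]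

theorem measure_closedBall_pos (q : Seminorm ℝ E) {r : ℝ} (hr : 0 < r) :
    0 < μ (q.closedBall 0 r) :=
  ((isOpen_lt q.continuous_of_finiteDimensional continuous_const).measure_pos μ
    ⟨0, by simpa using hr⟩).trans_le (measure_mono fun _ hy => q.mem_closedBall_zero.2 hy.le)

theorem measure_closedBall_lt_top (q : Seminorm ℝ E) (hq : ∀ x, q x = 0 → x = 0) (r : ℝ) :
    μ (q.closedBall 0 r) < ⊤ := by
  obtain ⟨m, hm, hmq⟩ := q.exists_pos_mul_norm_le hq
  refine (measure_mono fun y hy => ?_).trans_lt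
    (MeasureTheory.measure_closedBall_lt_top (x := 0) (r := r / m))
  rw [mem_closedBall_zero_iff, le_div_iff₀ hm, mul_comm]
  exact (hmq y).trans (q.mem_closedBall_zero.1 hy)

end Seminorm

theorem Seminorm.closedBall_subset_closedBall_div {E : Type*} [NormedAddCommGroup E]
    [NormedSpace ℝ E] {q : Seminorm ℝ E} {C : ℝ} (hC : 0 < C) (hqC : ∀ x, q x ≤ C * ‖x‖)
    (x : E) (r : ℝ) : Metric.closedBall x (r / C) ⊆ q.closedBall x r := fun y hy => by
  rw [Metric.mem_closedBall, dist_eq_norm, le_div_iff₀ hC] at hy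
  rw [Seminorm.mem_closedBall]
  linarith [hqC (y - x)]

theorem exists_closedBall_subset_closedBall_two_mul {E : Type*} [NormedAddCommGroup E]
    [NormedSpace ℝ E] (x x₀ : E) {s : ℝ} (hs : 0 ≤ s) :
    ∃ c, closedBall c s ⊆ closedBall x (2 * s) ∧
      ∀ y ∈ closedBall c s, dist y x₀ ≤ max (dist x x₀) s := by
  rcases le_or_gt (dist x x₀) s with hnear | hfar
  · refine ⟨x₀, fun y hy => ?_, fun y hy => le_max_of_le_right hy⟩
    rw [mem_closedBall] at hy ⊢
    linarith [dist_triangle y x₀ x, dist_comm x x₀]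
  · have hd : 0 < dist x x₀ := hs.trans_lt hfar
    set c := AffineMap.lineMap x x₀ (s / dist x x₀)
    have ht : s / dist x x₀ ≤ 1 := (div_le_one hd).2 hfar.le
    have hcx : dist c x = s := by
      rw [dist_lineMap_left, Real.norm_of_nonneg (div_nonneg hs hd.le), div_mul_cancel₀ _ hd.ne']
    have hcx₀ : dist c x₀ = dist x x₀ - s := by
      rw [dist_lineMap_right, Real.norm_of_nonneg (sub_nonneg.2 ht), sub_mul,
        div_mul_cancel₀ _ hd.ne', one_mul]
    refine ⟨c, fun y hy => ?_, fun y hy => le_max_of_le_left ?_⟩ <;> rw [mem_closedBall] at hy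
    · rw [mem_closedBall]
      linarith [dist_triangle y c x]
    · linarith [dist_triangle y c x₀]

theorem AntitoneOn.div_mul_le_max {h : ℝ → ℝ} (hanti : AntitoneOn h (Set.Ici 0))
    (hpos : ∀ r, 0 ≤ r → 0 < h r) {a s S : ℝ} (ha : 0 ≤ a) (hs : 0 ≤ s) (hsS : s ≤ S) :
    h S / h 0 * h a ≤ h (max a s) := by
  have h0 : 0 < h 0 := hpos 0 le_rfl
  have hS0 : h S ≤ h 0 := hanti Set.self_mem_Ici (hs.trans hsS) (hs.trans hsS)
  rcases le_total s a with hsa | has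
  · rw [max_eq_left hsa]
    exact mul_le_of_le_one_left (hpos a ha).le ((div_le_one h0).2 hS0)
  · rw [max_eq_right has]
    calc h S / h 0 * h a ≤ h S / h 0 * h 0 := by
          gcongr
          · exact div_nonneg (hpos S (hs.trans hsS)).le h0.le
          · exact hanti Set.self_mem_Ici ha ha
      _ = h S := div_mul_cancel₀ _ h0.ne'
      _ ≤ h s := hanti hs (hs.trans hsS) hsS

theorem ofReal_mul_le_withDensity_ofReal {α : Type*} [MeasurableSpace α] (μ : Measure α)
    {f : α → ℝ} {s : Set α} (hs : MeasurableSet s) {c : ℝ} (hc : ∀ y ∈ s, c ≤ f y) :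
    ENNReal.ofReal c * μ s ≤ μ.withDensity (fun y => ENNReal.ofReal (f y)) s := by
  rw [withDensity_apply _ hs, ← setLIntegral_const]
  exact setLIntegral_mono' hs fun y hy => ENNReal.ofReal_le_ofReal (hc y hy)

theorem ofReal_mul_measure_closedBall_le_withDensity_radial {E : Type*} [NormedAddCommGroup E]
    [NormedSpace ℝ E] [FiniteDimensional ℝ E] [MeasurableSpace E] [BorelSpace E]
    (μ : Measure E) [μ.IsAddHaarMeasure] {h : ℝ → ℝ} (hanti : AntitoneOn h (Set.Ici 0))
    (hpos : ∀ r, 0 ≤ r → 0 < h r) (x₀ x : E) {s S : ℝ} (hs : 0 ≤ s) (hsS : s ≤ S) :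
    ENNReal.ofReal (h S / h 0 * h ‖x - x₀‖ * s ^ finrank ℝ E) * μ (closedBall 0 1) ≤
      μ.withDensity (fun y => ENNReal.ofReal (h ‖y - x₀‖)) (closedBall x (2 * s)) := by
  obtain ⟨c, hsub, hdist⟩ := exists_closedBall_subset_closedBall_two_mul x x₀ hs
  have hdens : ∀ y ∈ closedBall c s, h S / h 0 * h ‖x - x₀‖ ≤ h ‖y - x₀‖ := fun y hy =>
    (hanti.div_mul_le_max hpos (norm_nonneg _) hs hsS).trans <|
      hanti (norm_nonneg _) ((norm_nonneg _).trans (le_max_left _ _))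
        (by simpa only [dist_eq_norm] using hdist y hy)
  have hκ : 0 ≤ h S / h 0 * h ‖x - x₀‖ := by
    have := hpos S (hs.trans hsS); have := hpos 0 le_rfl; have := hpos _ (norm_nonneg (x - x₀))
    positivity
  calc ENNReal.ofReal (h S / h 0 * h ‖x - x₀‖ * s ^ finrank ℝ E) * μ (closedBall 0 1)
      = ENNReal.ofReal (h S / h 0 * h ‖x - x₀‖) * μ (closedBall c s) := by
        rw [Measure.addHaar_closedBall' μ c hs, ← mul_assoc, ← ENNReal.ofReal_mul hκ]
    _ ≤ μ.withDensity (fun y => ENNReal.ofReal (h ‖y - x₀‖)) (closedBall c s) :=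
        ofReal_mul_le_withDensity_ofReal μ isClosed_closedBall.measurableSet hdens
    _ ≤ _ := measure_mono hsub

theorem exists_ofReal_mul_le_withDensity_seminorm_closedBall {E : Type*} [NormedAddCommGroup E]
    [NormedSpace ℝ E] [FiniteDimensional ℝ E] [MeasurableSpace E] [BorelSpace E]
    (μ : Measure E) [μ.IsAddHaarMeasure] (q : Seminorm ℝ E) (hq : ∀ x, q x = 0 → x = 0)
    {h : ℝ → ℝ} (hanti : AntitoneOn h (Set.Ici 0)) (hpos : ∀ r, 0 ≤ r → 0 < h r) (x₀ : E) :
    ∃ κ ∈ Set.Ioc (0 : ℝ) 1, ∃ rκ > (0 : ℝ), ∀ x, ∀ r ∈ Set.Icc (0 : ℝ) rκ,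
      ENNReal.ofReal (κ * h ‖x - x₀‖ * (μ (q.closedBall 0 1)).toReal * r ^ finrank ℝ E) ≤
        μ.withDensity (fun y => ENNReal.ofReal (h ‖y - x₀‖)) (q.closedBall x r) := by
  obtain ⟨C, hC, hqC⟩ := q.bound_of_continuous_normedSpace q.continuous_of_finiteDimensional
  set d := finrank ℝ E
  set ω := (μ (closedBall 0 1)).toReal
  set V := (μ (q.closedBall 0 1)).toReal
  have h0 := hpos 0 le_rfl
  have h1 := hpos 1 zero_le_one
  have hω : 0 < ω := ENNReal.toReal_pos (measure_closedBall_pos μ _ one_pos).ne'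
    measure_closedBall_lt_top.ne
  have hV : 0 < V := ENNReal.toReal_pos (q.measure_closedBall_pos μ one_pos).ne'
    (q.measure_closedBall_lt_top μ hq 1).ne
  -- `ω / ((2C)^d V)` compares the Euclidean ball of radius `r / (2C)` with the `q`-ball `B(x, r)`
  set κ := min 1 (h 1 / h 0 * ω / ((2 * C) ^ d * V))
  refine ⟨κ, ⟨lt_min one_pos (by positivity), min_le_left _ _⟩, 2 * C, by positivity,
    fun x r hr => ?_⟩
  have hs : 0 ≤ r / (2 * C) := div_nonneg hr.1 (by positivity)
  have hx := hpos _ (norm_nonneg (x - x₀))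
  calc ENNReal.ofReal (κ * h ‖x - x₀‖ * V * r ^ d)
      ≤ ENNReal.ofReal (h 1 / h 0 * h ‖x - x₀‖ * (r / (2 * C)) ^ d) * μ (closedBall 0 1) := by
        have hκω : κ * ((2 * C) ^ d * V) ≤ h 1 / h 0 * ω :=
          (le_div_iff₀ (by positivity)).1 (min_le_right _ _)
        rw [← ENNReal.ofReal_toReal measure_closedBall_lt_top.ne,
          ← ENNReal.ofReal_mul (by positivity)]
        refine ENNReal.ofReal_le_ofReal ?_
        calc κ * h ‖x - x₀‖ * V * r ^ d
            = κ * ((2 * C) ^ d * V) * (h ‖x - x₀‖ * (r / (2 * C)) ^ d) := by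
              rw [div_pow]; field_simp
          _ ≤ h 1 / h 0 * ω * (h ‖x - x₀‖ * (r / (2 * C)) ^ d) := by gcongr
          _ = h 1 / h 0 * h ‖x - x₀‖ * (r / (2 * C)) ^ d * ω := by ring
    _ ≤ μ.withDensity (fun y => ENNReal.ofReal (h ‖y - x₀‖)) (closedBall x (2 * (r / (2 * C)))) :=
        ofReal_mul_measure_closedBall_le_withDensity_radial μ hanti hpos x₀ x hs
          ((div_le_one (by positivity)).2 hr.2)
    _ ≤ _ := measure_mono <| by
        rw [show 2 * (r / (2 * C)) = r / C by field_simp]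
        exact q.closedBall_subset_closedBall_div hC hqC x r

theorem stmt13_general {d : ℕ}
    (N : EuclideanSpace ℝ (Fin d) → ℝ)
    (hNdef : ∀ y, N y = 0 ↔ y = 0)
    (hNsmul : ∀ (c : ℝ) (y), N (c • y) = |c| * N y)
    (hNadd : ∀ y z, N (y + z) ≤ N y + N z)
    (x₀ : EuclideanSpace ℝ (Fin d))
    (h : ℝ → ℝ) (hpos : ∀ r, 0 ≤ r → 0 < h r)
    (hanti : AntitoneOn h (Set.Ici 0))
    (p : EuclideanSpace ℝ (Fin d) → ℝ)
    (hp : ∀ y, p y = h ‖y - x₀‖)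
    (ν : Measure (EuclideanSpace ℝ (Fin d)))
    (hν : ν = volume.withDensity fun y => ENNReal.ofReal (p y))
    (vd : ℝ) (hvd : vd = (volume {y : EuclideanSpace ℝ (Fin d) | N y ≤ 1}).toReal) :
    ∃ κ ∈ Set.Ioc (0 : ℝ) 1, ∃ rκ > (0 : ℝ),
      ∀ x : EuclideanSpace ℝ (Fin d), ∀ r ∈ Set.Icc (0 : ℝ) rκ,
        ENNReal.ofReal (κ * p x * vd * r ^ d) ≤ ν {y | N (y - x) ≤ r} := by
  let q : Seminorm ℝ (EuclideanSpace ℝ (Fin d)) :=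
    Seminorm.of N hNadd fun c y => by rw [hNsmul, Real.norm_eq_abs]
  obtain ⟨κ, hκ, rκ, hrκ, hmass⟩ := exists_ofReal_mul_le_withDensity_seminorm_closedBall volume q
    (fun y => (hNdef y).1) hanti hpos x₀
  refine ⟨κ, hκ, rκ, hrκ, fun x r hr => ?_⟩
  have := hmass x r hr
  rw [q.closedBall_zero_eq, finrank_euclideanSpace_fin] at this
  subst hν hvd
  simp only [hp]
  exact this

/-- A radial, continuous, positive, nonincreasing density satisfies the strong minimal mass
assumption on the whole space, where balls are taken for an arbitrary norm `N`. -/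
theorem stmt13 {d : ℕ} (hd : 1 ≤ d)
    (N : EuclideanSpace ℝ (Fin d) → ℝ)
    (hN0 : ∀ y, 0 ≤ N y)
    (hNdef : ∀ y, N y = 0 ↔ y = 0)
    (hNsmul : ∀ (c : ℝ) (y), N (c • y) = |c| * N y)
    (hNadd : ∀ y z, N (y + z) ≤ N y + N z)
    (x₀ : EuclideanSpace ℝ (Fin d))
    (h : ℝ → ℝ) (hcont : Continuous h) (hpos : ∀ r, 0 ≤ r → 0 < h r)
    (hanti : AntitoneOn h (Set.Ici 0))
    (p : EuclideanSpace ℝ (Fin d) → ℝ)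
    (hp : ∀ y, p y = h ‖y - x₀‖)
    (ν : Measure (EuclideanSpace ℝ (Fin d)))
    (hν : ν = volume.withDensity fun y => ENNReal.ofReal (p y))
    (hprob : IsProbabilityMeasure ν)
    (vd : ℝ) (hvd : vd = (volume {y : EuclideanSpace ℝ (Fin d) | N y ≤ 1}).toReal) :
    ∃ κ ∈ Set.Ioc (0 : ℝ) 1, ∃ rκ > (0 : ℝ),
      ∀ x : EuclideanSpace ℝ (Fin d), ∀ r ∈ Set.Icc (0 : ℝ) rκ,
        ENNReal.ofReal (κ * p x * vd * r ^ d) ≤ ν {y | N (y - x) ≤ r} :=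
  stmt13_general N hNdef hNsmul hNadd x₀ h hpos hanti p hp ν hν vd hvd
end

section
/- Let w_j^{(k)} = (m/(kn)) ∑_{i=1}^n ∑_{l=1}^k 1{X'_j is the l-th nearest neighbor of X_i}. Then ∑_{j=1}^m (w_j^{(k)})² ≤ m²/k. -/
/-!
For each `i` the map `nn i` is injective, so `X'_j` occurs at most once among the `k` nearest
neighbours of `X_i`: the counts `c i j` lie in `{0, 1}` and each row sums to at most `k`.
Cauchy–Schwarz over `i` and `c² ≤ c` then give
`∑ⱼ (∑ᵢ c i j)² ≤ n ∑ᵢ ∑ⱼ c i j ≤ n² k`, and scaling by `(m / (k n))²` yields `m² / k`.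
-/

open Finset Function

theorem card_filter_and_eq_le_one {α β : Type*} [Fintype α] [DecidableEq β] {f : α → β}
    (hf : Injective f) (p : α → Prop) [DecidablePred p] (b : β) :
    #{a | p a ∧ f a = b} ≤ 1 :=
  card_le_one.mpr fun _ ha _ hb => hf <| (mem_filter.mp ha).2.2.trans (mem_filter.mp hb).2.2.symm

theorem sum_card_filter_and_eq {α β : Type*} [Fintype α] [Fintype β] [DecidableEq β]
    (f : α → β) (p : α → Prop) [DecidablePred p] :
    ∑ b, #{a | p a ∧ f a = b} = #{a | p a} := by
  rw [card_eq_sum_card_fiberwise fun a _ => mem_univ (f a)]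
  simp only [filter_filter]

theorem sum_sq_sum_le_of_le_one {ι κ R : Type*} [Fintype ι] [Fintype κ] [Field R] [LinearOrder R]
    [IsStrictOrderedRing R] {c : ι → κ → R} {K : R} (hc0 : ∀ i j, 0 ≤ c i j)
    (hc1 : ∀ i j, c i j ≤ 1) (hrow : ∀ i, ∑ j, c i j ≤ K) :
    ∑ j, (∑ i, c i j) ^ 2 ≤ (Fintype.card ι : R) ^ 2 * K :=
  calc ∑ j, (∑ i, c i j) ^ 2 ≤ ∑ j, (Fintype.card ι : R) * ∑ i, c i j ^ 2 :=
        sum_le_sum fun j _ => sq_sum_le_card_mul_sum_sq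
    _ ≤ ∑ j, (Fintype.card ι : R) * ∑ i, c i j := by
        gcongr with j _ i _
        exact pow_le_of_le_one (hc0 i j) (hc1 i j) two_ne_zero
    _ = Fintype.card ι * ∑ i, ∑ j, c i j := by rw [← mul_sum, sum_comm]
    _ ≤ Fintype.card ι * (Fintype.card ι * K) := by
        gcongr
        simpa using sum_le_sum fun i (_ : i ∈ univ) => hrow i
    _ = (Fintype.card ι : R) ^ 2 * K := by ring

-- With the junk value `x / 0 = 0` this also holds when `k = 0` or `n = 0`.
theorem div_mul_sq_mul_le {R : Type*} [Field R] [LinearOrder R] [IsStrictOrderedRing R]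
    (a : R) {k : R} (hk : 0 ≤ k) (n : R) :
    (a / (k * n)) ^ 2 * (n ^ 2 * k) ≤ a ^ 2 / k := by
  rcases eq_or_ne k 0 with rfl | hk0
  · simp
  rcases eq_or_ne n 0 with rfl | hn0
  · simpa using div_nonneg (sq_nonneg a) hk
  · exact (by field_simp : (a / (k * n)) ^ 2 * (n ^ 2 * k) = a ^ 2 / k).le

theorem stmt15_general {n m k : ℕ}
    (nn : Fin n → Fin m → Fin m)
    (hbij : ∀ i, Function.Bijective (nn i))
    (w : Fin m → ℝ)
    (hw : ∀ j, w j = (m : ℝ) / (k * n) *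
      ∑ i, ((Finset.univ.filter fun l : Fin m => (l : ℕ) < k ∧ nn i l = j).card : ℝ)) :
    ∑ j, w j ^ 2 ≤ (m : ℝ) ^ 2 / k := by
  let c : Fin n → Fin m → ℝ := fun i j => (#{l : Fin m | (l : ℕ) < k ∧ nn i l = j} : ℝ)
  have hc1 : ∀ i j, c i j ≤ 1 := fun i j =>
    Nat.cast_le_one.mpr (card_filter_and_eq_le_one (hbij i).1 _ j)
  have hrow : ∀ i, ∑ j, c i j ≤ k := fun i => by
    simp only [c]
    exact_mod_cast (sum_card_filter_and_eq (nn i) _).trans_le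
      (Fin.card_filter_val_lt.trans_le (min_le_right m k))
  calc ∑ j, w j ^ 2 = ((m : ℝ) / (k * n)) ^ 2 * ∑ j, (∑ i, c i j) ^ 2 := by
        simp_rw [hw, mul_pow, mul_sum]
        rfl
    _ ≤ ((m : ℝ) / (k * n)) ^ 2 * ((n : ℝ) ^ 2 * k) := by
        gcongr
        simpa using sum_sq_sum_le_of_le_one (fun i j => Nat.cast_nonneg _) hc1 hrow
    _ ≤ (m : ℝ) ^ 2 / k := div_mul_sq_mul_le _ k.cast_nonneg _

/-- The sum of squares of the `k`-NN weights is at most `m²/k`. -/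
theorem stmt15 {n m k : ℕ} (hn : 0 < n) (hk : 1 ≤ k) (hkm : k ≤ m)
    (nn : Fin n → Fin m → Fin m)
    (hbij : ∀ i, Function.Bijective (nn i))
    (w : Fin m → ℝ)
    (hw : ∀ j, w j = (m : ℝ) / (k * n) *
      ∑ i, ((Finset.univ.filter fun l : Fin m => (l : ℕ) < k ∧ nn i l = j).card : ℝ)) :
    ∑ j, w j ^ 2 ≤ (m : ℝ) ^ 2 / k :=
  stmt15_general nn hbij w hw
end
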